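/- Existence of an enumerative lossless code matching the conditional empirical entropy: fix a finite alphabet A and an integer k ≥ 0. For every ε > 0 there exists N such that for every n ≥ N (with n > k) there is a function l_n : Aⁿ → ℕ satisfying Kraft's inequality Σ_{y∈Aⁿ} 2^{−l_n(y)} ≤ 1 and l_n(y) ≤ n(H_k(y) + ε) for every y ∈ Aⁿ. -/

import Mathlib

/-- The `(k+1)`-th order empirical count `m_{a,b}(y)`: the fraction of positions
`i` of `y` (indices extended cyclically) whose preceding `k`-context is `b` and
whose symbol is `a`. -/
noncomputable def empCount {A : Type*} [Fintype A] [DecidableEq A] (n k : ℕ)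
    (y : Fin n → A) (a : A) (b : Fin k → A) : ℝ :=
  ((Finset.univ.filter fun i : Fin n =>
      y i = a ∧ ∀ j : Fin k,
        y ⟨(i.val + (n - (k - j.val) % n)) % n, Nat.mod_lt _ i.pos⟩ = b j).card : ℝ) / n

/-- The conditional empirical entropy `H_k(y)` of order `k` (base-2 logarithms,
with the convention `0·log 0 = 0`): the conditional Shannon entropy
`H(Y_{k+1} | Y_1,…,Y_k)` of a random vector distributed according to the
empirical counts of `y`. -/
noncomputable def condEmpEntropy {A : Type*} [Fintype A] [DecidableEq A]
    (n k : ℕ) (y : Fin n → A) : ℝ :=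
  -∑ b : Fin k → A, ∑ a : A,
      empCount n k y a b *
        Real.logb 2 (empCount n k y a b / ∑ a' : A, empCount n k y a' b)

/-!
For a fixed count matrix `v`, the normalized counts `condFreq v` form a sub-stochastic kernel
from contexts to symbols. Multiplying its values along the positions `i ≥ k` of a word (whose
contexts do not wrap around) and summing over all words telescopes, symbol by symbol from the
right, to at most `|A|^k`. For the count matrix of `y` itself this product is exactly
`2^(-n H_k(y))`, and there are at most `(n+1)^(|A|^(k+1))` count matrices, so
`∑ y, 2^(-n H_k(y)) ≤ (n+1)^(|A|^(k+1) + k)` once `n ≥ |A|`. The lengths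
`⌈n H_k(y)⌉ + ⌈log₂ (n+1)^(|A|^(k+1) + k)⌉` then satisfy Kraft's inequality, with an overhead
of order `log n = o(n)`.
-/

open Finset Real

section
variable {A : Type*}

def cyclicContext (n k : ℕ) (y : Fin n → A) (i : Fin n) : Fin k → A :=
  fun j => y ⟨(i.val + (n - (k - j.val) % n)) % n, Nat.mod_lt _ i.pos⟩

def jointCount [DecidableEq A] (n k : ℕ) (y : Fin n → A) (a : A) (b : Fin k → A) : ℕ :=
  #{i | y i = a ∧ cyclicContext n k y i = b}

noncomputable def condFreq [Fintype A] {B : Type*} (v : A → B → ℕ) (a : A) (b : B) : ℝ :=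
  v a b / ∑ a', (v a' b : ℝ)

lemma empCount_eq [Fintype A] [DecidableEq A] (n k : ℕ) (y : Fin n → A) (a : A)
    (b : Fin k → A) : empCount n k y a b = jointCount n k y a b / n := by
  simp only [empCount, jointCount, cyclicContext, funext_iff]

lemma empCount_nonneg [Fintype A] [DecidableEq A] (n k : ℕ) (y : Fin n → A) (a : A)
    (b : Fin k → A) : 0 ≤ empCount n k y a b := by
  rw [empCount]; positivity

lemma jointCount_le [DecidableEq A] (n k : ℕ) (y : Fin n → A) (a : A) (b : Fin k → A) :
    jointCount n k y a b ≤ n :=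
  (card_filter_le _ _).trans_eq (card_fin n)

lemma condFreq_nonneg [Fintype A] {B : Type*} (v : A → B → ℕ) (a : A) (b : B) :
    0 ≤ condFreq v a b := by
  unfold condFreq; positivity

lemma condFreq_pos [Fintype A] {B : Type*} {v : A → B → ℕ} {a : A} {b : B} (h : v a b ≠ 0) :
    0 < condFreq v a b := by
  have ha : (0 : ℝ) < v a b := by positivity
  exact div_pos ha (ha.trans_le (single_le_sum (fun a' _ => Nat.cast_nonneg (v a' b)) (mem_univ a)))

lemma sum_condFreq_le_one [Fintype A] {B : Type*} (v : A → B → ℕ) (b : B) :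
    ∑ a, condFreq v a b ≤ 1 := by
  simp only [condFreq, ← sum_div]
  exact div_self_le_one _

lemma empCount_div_sum_empCount [Fintype A] [DecidableEq A] {n : ℕ} (hn : n ≠ 0) (k : ℕ)
    (y : Fin n → A) (a : A) (b : Fin k → A) :
    empCount n k y a b / ∑ a', empCount n k y a' b = condFreq (jointCount n k y) a b := by
  simp only [empCount_eq, ← sum_div, condFreq]
  exact div_div_div_cancel_right₀ (Nat.cast_ne_zero.2 hn) _ _

lemma condEmpEntropy_nonneg [Fintype A] [DecidableEq A] (n k : ℕ) (y : Fin n → A) :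
    0 ≤ condEmpEntropy n k y := by
  rw [condEmpEntropy, neg_nonneg]
  refine sum_nonpos fun b _ => sum_nonpos fun a _ =>
    mul_nonpos_of_nonneg_of_nonpos (empCount_nonneg ..) (logb_nonpos one_lt_two ?_ ?_)
  · exact div_nonneg (empCount_nonneg ..) (sum_nonneg fun _ _ => empCount_nonneg ..)
  · exact div_le_one_of_le₀
      (single_le_sum (f := (empCount n k y · b)) (fun _ _ => empCount_nonneg ..) (mem_univ a))
      (sum_nonneg fun _ _ => empCount_nonneg ..)

lemma rpow_sum_natCast_mul_logb {ι : Type*} {b : ℝ} (hb : 0 < b) (hb1 : b ≠ 1) (s : Finset ι)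
    (c : ι → ℕ) (q : ι → ℝ) (hq : ∀ i ∈ s, c i ≠ 0 → 0 < q i) :
    b ^ (∑ i ∈ s, c i * logb b (q i)) = ∏ i ∈ s, q i ^ c i := by
  rw [rpow_sum_of_pos hb]
  refine prod_congr rfl fun i hi => ?_
  rcases eq_or_ne (c i) 0 with hc | hc
  · simp [hc]
  · rw [mul_comm, rpow_mul hb.le, rpow_logb hb hb1 (hq i hi hc), rpow_natCast]

lemma prod_pow_jointCount [Fintype A] [DecidableEq A] {M : Type*} [CommMonoid M] (n k : ℕ)
    (y : Fin n → A) (f : A → (Fin k → A) → M) :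
    ∏ b, ∏ a, f a b ^ jointCount n k y a b = ∏ i, f (y i) (cyclicContext n k y i) := by
  rw [← prod_fiberwise univ (fun i => (y i, cyclicContext n k y i)), prod_comm,
    ← Fintype.prod_prod_type' (fun a b => f a b ^ jointCount n k y a b)]
  refine prod_congr rfl fun x _ => ?_
  rw [prod_congr rfl fun i hi =>
    congrArg (fun z : A × (Fin k → A) => f z.1 z.2) (mem_filter.1 hi).2, prod_const]
  simp only [jointCount, Prod.ext_iff]

lemma two_rpow_neg_mul_condEmpEntropy [Fintype A] [DecidableEq A] {n : ℕ} (hn : n ≠ 0)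
    (k : ℕ) (y : Fin n → A) :
    (2 : ℝ) ^ (-(n * condEmpEntropy n k y)) =
      ∏ i, condFreq (jointCount n k y) (y i) (cyclicContext n k y i) := by
  have hsum : -(n * condEmpEntropy n k y) =
      ∑ b, ∑ a, jointCount n k y a b * logb 2 (condFreq (jointCount n k y) a b) := by
    simp only [condEmpEntropy, mul_neg, neg_neg, mul_sum, empCount_div_sum_empCount hn]
    simp only [empCount_eq, ← mul_assoc, mul_div_cancel₀ _ (Nat.cast_ne_zero.2 hn : (n : ℝ) ≠ 0)]
  rw [hsum, rpow_sum_of_pos two_pos, ← prod_pow_jointCount]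
  exact prod_congr rfl fun b _ =>
    rpow_sum_natCast_mul_logb two_pos (by norm_num) _ _ _ fun a _ => condFreq_pos

lemma sum_le_sum_of_snoc_eq_mul [Fintype A] {N : ℕ} (F : (Fin N → A) → ℝ)
    (G : (Fin (N + 1) → A) → ℝ) (q : (Fin N → A) → A → ℝ) (hF : ∀ y, 0 ≤ F y)
    (hq : ∀ y, ∑ a, q y a ≤ 1) (hG : ∀ y a, G (Fin.snoc y a) = F y * q y a) : ∑ y, G y ≤ ∑ y, F y := by
  rw [← (Fin.snocEquiv fun _ => A).sum_comp, Fintype.sum_prod_type, sum_comm]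
  refine sum_le_sum fun y _ => ?_
  simp only [Fin.snocEquiv, Equiv.coe_fn_mk, hG, ← mul_sum]
  exact mul_le_of_le_one_right (hF y) (hq y)

lemma sum_prod_window_le [Fintype A] (k : ℕ) (p : A → (Fin k → A) → ℝ)
    (hp_nonneg : ∀ a b, 0 ≤ p a b) (hp_sum : ∀ b, ∑ a, p a b ≤ 1) (m : ℕ) :
    ∑ y : Fin (k + m) → A, ∏ t : Fin m, p (y (Fin.natAdd k t)) (fun j => y ⟨t + j, by omega⟩)
      ≤ Fintype.card A ^ k := by
  induction m with
  | zero => simp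
  | succ m ih =>
    refine (sum_le_sum_of_snoc_eq_mul _ _
      (fun (y : Fin (k + m) → A) a => p a fun j => y ⟨m + j, by omega⟩)
      (fun y => prod_nonneg fun t _ => hp_nonneg _ _) (fun y => hp_sum _) fun y a => ?_).trans ih
    rw [Fin.prod_univ_castSucc]
    congr 1
    · refine prod_congr rfl fun t _ => ?_
      have ht (j : Fin k) : (t : ℕ) + j < k + m := by omega
      simp only [Fin.snoc, Fin.val_natAdd, Fin.val_castSucc, add_lt_add_iff_left, Fin.is_lt,
        ↓reduceDIte, cast_eq, ht]
      rfl
    · have hm (j : Fin k) : m + (j : ℕ) < k + m := by omega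
      simp [Fin.snoc, hm]

lemma cyclicContext_natAdd (k m : ℕ) (y : Fin (k + m) → A) (t : Fin m) :
    cyclicContext (k + m) k y (Fin.natAdd k t) = fun j : Fin k => y ⟨t + j, by omega⟩ := by
  funext j
  have := t.isLt
  have hj : (k - j) % (k + m) = k - j := Nat.mod_eq_of_lt (by omega)
  have hsum : k + t + (k + m - (k - j)) = (k + m) + (t + j) := by omega
  simp only [cyclicContext, Fin.val_natAdd, hj, hsum, Nat.add_mod_left,
    Nat.mod_eq_of_lt (show (t : ℕ) + j < k + m by omega)]

lemma prod_cyclicContext_le_prod_window (k m : ℕ) (p : A → (Fin k → A) → ℝ)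
    (hp_nonneg : ∀ a b, 0 ≤ p a b) (hp_le_one : ∀ a b, p a b ≤ 1) (y : Fin (k + m) → A) :
    ∏ i, p (y i) (cyclicContext (k + m) k y i) ≤
      ∏ t : Fin m, p (y (Fin.natAdd k t)) (fun j => y ⟨t + j, by omega⟩) := by
  rw [Fin.prod_univ_add]
  simp only [cyclicContext_natAdd]
  exact mul_le_of_le_one_left (prod_nonneg fun _ _ => hp_nonneg _ _)
    (prod_le_one (fun _ _ => hp_nonneg _ _) fun _ _ => hp_le_one _ _)

lemma sum_prod_cyclicContext_le [Fintype A] {n k : ℕ} (hk : k ≤ n) (p : A → (Fin k → A) → ℝ)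
    (hp_nonneg : ∀ a b, 0 ≤ p a b) (hp_sum : ∀ b, ∑ a, p a b ≤ 1) :
    ∑ y : Fin n → A, ∏ i, p (y i) (cyclicContext n k y i) ≤ Fintype.card A ^ k := by
  obtain ⟨m, rfl⟩ := Nat.exists_eq_add_of_le hk
  have hp_le_one a b : p a b ≤ 1 :=
    (single_le_sum (fun a' _ => hp_nonneg a' b) (mem_univ a)).trans (hp_sum b)
  exact (sum_le_sum fun y _ => prod_cyclicContext_le_prod_window k m p hp_nonneg hp_le_one y).trans
    (sum_prod_window_le k p hp_nonneg hp_sum m)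

lemma sum_two_rpow_neg_mul_condEmpEntropy_le [Fintype A] [DecidableEq A] {n k : ℕ} (hk : k < n) :
    ∑ y : Fin n → A, (2 : ℝ) ^ (-(n * condEmpEntropy n k y)) ≤
      (n + 1) ^ (Fintype.card A ^ (k + 1)) * Fintype.card A ^ k := by
  set T := Fintype.piFinset fun _ : A => Fintype.piFinset fun _ : Fin k → A => range (n + 1)
  have hT y : jointCount n k y ∈ T := by simp [T, jointCount_le]
  -- Dominate the term of `y` by the sum over all count matrices; for a fixed matrix `v`,
  -- `condFreq v` is a sub-stochastic kernel.
  calc ∑ y : Fin n → A, (2 : ℝ) ^ (-(n * condEmpEntropy n k y))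
      = ∑ y : Fin n → A, ∏ i, condFreq (jointCount n k y) (y i) (cyclicContext n k y i) := by
        simp only [two_rpow_neg_mul_condEmpEntropy (show n ≠ 0 by omega)]
    _ ≤ ∑ y : Fin n → A, ∑ v ∈ T, ∏ i, condFreq v (y i) (cyclicContext n k y i) :=
        sum_le_sum fun y _ =>
          single_le_sum (f := fun v => ∏ i, condFreq v (y i) (cyclicContext n k y i))
          (fun v _ => prod_nonneg fun i _ => condFreq_nonneg v _ _) (hT y)
    _ = ∑ v ∈ T, ∑ y : Fin n → A, ∏ i, condFreq v (y i) (cyclicContext n k y i) := sum_comm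
    _ ≤ ∑ v ∈ T, (Fintype.card A : ℝ) ^ k :=
        sum_le_sum fun v _ => sum_prod_cyclicContext_le hk.le _ (condFreq_nonneg v)
          (sum_condFreq_le_one v)
    _ = (n + 1) ^ (Fintype.card A ^ (k + 1)) * Fintype.card A ^ k := by
        simp [T, ← pow_mul, ← pow_succ]

end

lemma sum_two_rpow_neg_natCeil_add_le_one {ι : Type*} [Fintype ι] (f : ι → ℝ) {c : ℕ}
    (h : ∑ i, (2 : ℝ) ^ (-f i) ≤ 2 ^ c) : ∑ i, (2 : ℝ) ^ (-((⌈f i⌉₊ + c : ℕ) : ℝ)) ≤ 1 :=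
  calc ∑ i, (2 : ℝ) ^ (-((⌈f i⌉₊ + c : ℕ) : ℝ)) ≤ ∑ i, (2 : ℝ) ^ (-f i) * (2 ^ c)⁻¹ :=
        sum_le_sum fun i _ => by
          rw [Nat.cast_add, neg_add, rpow_add two_pos, rpow_neg two_pos.le (c : ℝ), rpow_natCast]
          gcongr
          · norm_num
          · exact Nat.le_ceil (f i)
    _ ≤ 1 := by
        rw [← sum_mul]
        exact mul_inv_le_one_of_le₀ h (by positivity)

open Filter Asymptotics in
lemma eventually_clog_pow_add_one_le (d : ℕ) {ε : ℝ} (hε : 0 < ε) :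
    ∀ᶠ n : ℕ in atTop, (Nat.clog 2 ((n + 1) ^ d) : ℝ) + 1 ≤ ε * n := by
  have hone : (fun _ : ℕ => (1 : ℝ)) =o[atTop] (fun n : ℕ => (n : ℝ)) :=
    (isLittleO_const_id_atTop 1).comp_tendsto tendsto_natCast_atTop_atTop
  have hlog : (fun n : ℕ => logb 2 ((n : ℝ) + 1)) =o[atTop] (fun n : ℕ => (n : ℝ)) :=
    (isLittleO_logb_id_atTop.comp_tendsto
      (tendsto_atTop_add_const_right _ 1 tendsto_natCast_atTop_atTop)).trans_isBigO
      ((isBigO_refl _ _).add hone.isBigO)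
  have hbound : (fun n : ℕ => d * logb 2 ((n : ℝ) + 1) + 2 * 1) =o[atTop] (fun n : ℕ => (n : ℝ)) :=
    (hlog.const_mul_left d).add (hone.const_mul_left 2)
  filter_upwards [hbound.bound hε] with n hn
  rw [Real.norm_natCast, Real.norm_eq_abs] at hn
  have hceil : (Nat.clog 2 ((n + 1) ^ d) : ℝ) < d * logb 2 ((n : ℝ) + 1) + 1 := by
    have h := natCeil_logb_natCast 2 ((n + 1) ^ d)
    push_cast at h
    rw [← h, logb_pow]
    exact Nat.ceil_lt_add_one (mul_nonneg d.cast_nonneg (logb_nonneg one_lt_two (by simp)))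
  linarith [le_abs_self (d * logb 2 ((n : ℝ) + 1) + 2 * 1)]

/-- Existence of an enumerative lossless code essentially matching the
conditional empirical entropy: for every `ε > 0` there is `N` such that for all
`n ≥ N` (with `n > k`) there is a length function `l_n : Aⁿ → ℕ` satisfying
Kraft's inequality and `l_n(y) ≤ n(H_k(y) + ε)` for every `y`. -/
theorem exists_code_matching_condEmpEntropy {A : Type*} [Fintype A] [DecidableEq A]
    (k : ℕ) (ε : ℝ) (hε : 0 < ε) :
    ∃ N : ℕ, ∀ n : ℕ, N ≤ n → k < n →
      ∃ l : (Fin n → A) → ℕ,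
        (∑ y : Fin n → A, (2 : ℝ) ^ (-(l y : ℝ)) ≤ 1) ∧
        ∀ y : Fin n → A, (l y : ℝ) ≤ n * (condEmpEntropy n k y + ε) := by
  set d := Fintype.card A ^ (k + 1) + k
  obtain ⟨N, hN⟩ := Filter.eventually_atTop.1 ((Filter.eventually_ge_atTop (Fintype.card A)).and
    (eventually_clog_pow_add_one_le d hε))
  refine ⟨N, fun n hn hkn => ?_⟩
  obtain ⟨hA, hc⟩ := hN n hn
  set c := Nat.clog 2 ((n + 1) ^ d)
  refine ⟨fun y => ⌈n * condEmpEntropy n k y⌉₊ + c, ?_, fun y => ?_⟩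
  · refine sum_two_rpow_neg_natCeil_add_le_one _ ?_
    calc _ ≤ ((n + 1) ^ (Fintype.card A ^ (k + 1)) * Fintype.card A ^ k : ℝ) :=
          sum_two_rpow_neg_mul_condEmpEntropy_le hkn
      _ ≤ (n + 1) ^ (Fintype.card A ^ (k + 1)) * (n + 1) ^ k := by
          gcongr
          exact_mod_cast hA.trans n.le_succ
      _ = ((n + 1) ^ d : ℕ) := by push_cast [d, pow_add]; rfl
      _ ≤ 2 ^ c := by exact_mod_cast Nat.le_pow_clog one_lt_two _
  · have := Nat.ceil_lt_add_one (mul_nonneg n.cast_nonneg (condEmpEntropy_nonneg n k y))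
    push_cast
    linarith
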